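/- For every k ≥ 1 and every x > x̄_k, one has V_k(x) > V_{k−1}(x). -/

import Mathlib

/-!
Write `G_k(x) = e^{-r/n} E[V_k(x + Y)]`, so that `V_{k+1} = max(f, G_k)`. The `V_k` increase
with `k`, and `G_k` is continuous, positive and at most `e^{-r/n} K < K`, so it lies below the
exercise line `K - e^x` far to the left. As `x̄_{k+1}` is the only crossing of `G_k` with that
line left of `x̄_k`, the intermediate value theorem gives `G_k < K - e^x` left of `x̄_{k+1}`
(so `V_k = V_{k+1} = K - e^x` there), and `G_k > K - e^x` on `(x̄_{k+1}, x̄_k]` as soon as this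
holds at `x̄_k`.

By induction on `k`, `G_k > K - e^x` and `V_k < V_{k+1}` on `(x̄_{k+1}, ∞)`. The step hinges on
`G_k(x̄_{k+1}) < G_{k+1}(x̄_{k+1})`: since `V_{k+1} - V_k ≥ 0` is zero on `(-∞, x̄_{k+1}]` and
positive beyond, equality would give `V_k(x + Y) = V_{k+1}(x + Y)` a.s. for every `x ≤ x̄_{k+1}`, in particular
`G_k = G_{k+1}` at `x̄_{k+2}`, where however `G_k < K - e^x = G_{k+1}`.
-/

open MeasureTheory

/-- The recursively defined value functions for the Canadised American put:
`V_0(x) = (K − e^x)⁺` and `V_k(x) = max{(K − e^x)⁺, e^{−r/n} E[V_{k−1}(x + Y)]}`. -/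
noncomputable def putV {Ω : Type*} [MeasurableSpace Ω] (P : Measure Ω) (Y : Ω → ℝ)
    (K r : ℝ) (n : ℕ) : ℕ → ℝ → ℝ
  | 0 => fun x => max (K - Real.exp x) 0
  | k + 1 => fun x =>
      max (max (K - Real.exp x) 0)
        (Real.exp (-(r / n)) * ∫ ω, putV P Y K r n k (x + Y ω) ∂P)

open Set Filter Real

theorem IsPreconnected.lt_of_lt_of_ne {X α : Type*} [TopologicalSpace X] [LinearOrder α]
    [TopologicalSpace α] [OrderClosedTopology α] {s : Set X} (hs : IsPreconnected s)
    {f g : X → α} (hf : ContinuousOn f s) (hg : ContinuousOn g s) (hne : ∀ x ∈ s, f x ≠ g x)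
    {a x : X} (ha : a ∈ s) (hfga : f a < g a) (hx : x ∈ s) : f x < g x := by
  by_contra! hgf
  obtain ⟨y, hy, hfg⟩ := hs.intermediate_value₂ ha hx hf hg hfga.le hgf
  exact hne y hy hfg

section TranslatedIntegral

variable {Ω : Type*} [MeasurableSpace Ω] {P : Measure Ω} {Y : Ω → ℝ} {g h : ℝ → ℝ}

theorem integrable_comp_add [IsFiniteMeasure P] (hg : Measurable g) {C : ℝ}
    (hC : ∀ y, ‖g y‖ ≤ C) (hY : Measurable Y) (x : ℝ) :
    Integrable (fun ω => g (x + Y ω)) P :=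
  (integrable_const C).mono' (hg.comp (measurable_const.add hY)).aestronglyMeasurable
    (ae_of_all _ fun _ => hC _)

theorem continuous_integral_comp_add [IsFiniteMeasure P] (hg : Continuous g) {C : ℝ}
    (hC : ∀ y, ‖g y‖ ≤ C) (hY : Measurable Y) :
    Continuous fun x => ∫ ω, g (x + Y ω) ∂P :=
  continuous_of_dominated
    (fun _ => (hg.measurable.comp (measurable_const.add hY)).aestronglyMeasurable)
    (fun _ => ae_of_all _ fun _ => hC _) (integrable_const C)
    (ae_of_all _ fun _ => hg.comp (continuous_id.add continuous_const))

theorem integral_comp_add_lt_of_le (hgi : ∀ x, Integrable (fun ω => g (x + Y ω)) P)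
    (hhi : ∀ x, Integrable (fun ω => h (x + Y ω)) P) (hgh : g ≤ h)
    (hup : ∀ ⦃y y'⦄, y ≤ y' → g y < h y → g y' < h y') {z x : ℝ} (hzx : z ≤ x)
    (hz : ∫ ω, g (z + Y ω) ∂P < ∫ ω, h (z + Y ω) ∂P) :
    ∫ ω, g (x + Y ω) ∂P < ∫ ω, h (x + Y ω) ∂P := by
  refine (integral_mono (hgi x) (hhi x) fun _ => hgh _).lt_of_ne fun hx => hz.ne ?_
  have hx_ae := (integral_eq_iff_of_ae_le (hgi x) (hhi x) (ae_of_all _ fun _ => hgh _)).1 hx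
  refine integral_congr_ae ?_
  filter_upwards [hx_ae] with ω hω
  exact (hgh _).eq_of_not_lt fun hlt => (hup (by linarith) hlt).ne hω

end TranslatedIntegral

section PutValue

variable {Ω : Type*} [MeasurableSpace Ω] {P : Measure Ω} {Y : Ω → ℝ} {K r : ℝ} {n k : ℕ}
  {x z : ℝ}

-- The continuation value `G_k`.
noncomputable def putCont (P : Measure Ω) (Y : Ω → ℝ) (K r : ℝ) (n k : ℕ) (x : ℝ) : ℝ :=
  exp (-(r / n)) * ∫ ω, putV P Y K r n k (x + Y ω) ∂P

theorem putV_succ_eq :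
    putV P Y K r n (k + 1) x = max (max (K - exp x) 0) (putCont P Y K r n k x) := rfl

theorem max_sub_exp_le_putV : max (K - exp x) 0 ≤ putV P Y K r n k x := by
  cases k
  · exact le_rfl
  · exact le_max_left _ _

theorem putV_nonneg : 0 ≤ putV P Y K r n k x :=
  (le_max_right _ _).trans max_sub_exp_le_putV

theorem exp_neg_div_le_one (hr : 0 ≤ r) : exp (-(r / n)) ≤ 1 :=
  exp_le_one_iff.2 (neg_nonpos.2 (by positivity))

theorem exp_neg_div_lt_one (hr : 0 < r) (hn : 0 < n) : exp (-(r / n)) < 1 :=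
  exp_lt_one_iff.2 (neg_neg_of_pos (by positivity))

variable [IsProbabilityMeasure P]

theorem putV_le (hK : 0 ≤ K) (hr : 0 ≤ r) (k : ℕ) (x : ℝ) : putV P Y K r n k x ≤ K := by
  induction k generalizing x with
  | zero => exact max_le (by linarith [exp_pos x]) hK
  | succ k ih =>
    refine max_le (max_le (by linarith [exp_pos x]) hK) ?_
    have hint : ∫ ω, putV P Y K r n k (x + Y ω) ∂P ≤ K := by
      have := norm_integral_le_of_norm_le_const (μ := P) (C := K)
        (ae_of_all _ fun ω => (norm_of_nonneg putV_nonneg).trans_le (ih (x + Y ω)))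
      simpa using (le_abs_self _).trans this
    exact (mul_le_of_le_one_left (integral_nonneg fun _ => putV_nonneg)
      (exp_neg_div_le_one hr)).trans hint

theorem norm_putV_le (hK : 0 ≤ K) (hr : 0 ≤ r) (y : ℝ) : ‖putV P Y K r n k y‖ ≤ K :=
  (norm_of_nonneg putV_nonneg).trans_le (putV_le hK hr k y)

theorem continuous_putV (hK : 0 ≤ K) (hr : 0 ≤ r) (hY : Measurable Y) (k : ℕ) :
    Continuous (putV P Y K r n k) := by
  have hf : Continuous fun x => max (K - exp x) 0 :=
    (continuous_const.sub continuous_exp).max continuous_const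
  induction k with
  | zero => exact hf
  | succ k ih =>
    exact hf.max (continuous_const.mul
      (continuous_integral_comp_add ih (norm_putV_le hK hr) hY))

theorem continuous_putCont (hK : 0 ≤ K) (hr : 0 ≤ r) (hY : Measurable Y) :
    Continuous (putCont P Y K r n k) :=
  continuous_const.mul
    (continuous_integral_comp_add (continuous_putV hK hr hY k) (norm_putV_le hK hr) hY)

theorem integrable_putV_comp_add (hK : 0 ≤ K) (hr : 0 ≤ r) (hY : Measurable Y) (x : ℝ) :
    Integrable (fun ω => putV P Y K r n k (x + Y ω)) P :=
  integrable_comp_add (continuous_putV hK hr hY k).measurable (norm_putV_le hK hr) hY x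

theorem putCont_le_mul (hK : 0 ≤ K) (hr : 0 ≤ r) (hY : Measurable Y) :
    putCont P Y K r n k x ≤ exp (-(r / n)) * K := by
  refine mul_le_mul_of_nonneg_left ?_ (exp_pos _).le
  simpa using integral_mono (integrable_putV_comp_add hK hr hY x) (integrable_const (μ := P) K)
    fun ω => putV_le hK hr k (x + Y ω)

theorem putCont_pos (hK : 0 < K) (hr : 0 ≤ r) (hY : Measurable Y)
    (hYneg : ∀ y : ℝ, 0 < P {ω | Y ω < y}) : 0 < putCont P Y K r n k x := by
  have hsupp : {ω | Y ω < log K - x} ⊆ Function.support fun ω => putV P Y K r n k (x + Y ω) := by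
    intro ω (hω : Y ω < log K - x)
    have hexp : exp (x + Y ω) < K := (lt_log_iff_exp_lt hK).1 (by linarith)
    exact ((sub_pos.2 hexp).trans_le ((le_max_left _ _).trans max_sub_exp_le_putV)).ne'
  exact mul_pos (exp_pos _) ((integral_pos_iff_support_of_nonneg (fun _ => putV_nonneg)
    (integrable_putV_comp_add hK.le hr hY x)).2 ((hYneg _).trans_le (measure_mono hsupp)))

theorem putV_le_putV_succ (hK : 0 ≤ K) (hr : 0 ≤ r) (hY : Measurable Y) (k : ℕ) (x : ℝ) :
    putV P Y K r n k x ≤ putV P Y K r n (k + 1) x := by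
  induction k generalizing x with
  | zero => exact le_max_left _ _
  | succ k ih =>
    refine max_le_max le_rfl (mul_le_mul_of_nonneg_left ?_ (exp_pos _).le)
    exact integral_mono (integrable_putV_comp_add hK hr hY x)
      (integrable_putV_comp_add hK hr hY x) fun ω => ih (x + Y ω)

theorem putCont_le_putCont_succ (hK : 0 ≤ K) (hr : 0 ≤ r) (hY : Measurable Y) :
    putCont P Y K r n k x ≤ putCont P Y K r n (k + 1) x :=
  mul_le_mul_of_nonneg_left (integral_mono (integrable_putV_comp_add hK hr hY x)
    (integrable_putV_comp_add hK hr hY x) fun ω => putV_le_putV_succ hK hr hY k (x + Y ω))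
    (exp_pos _).le

theorem exists_putCont_lt (hK : 0 < K) (hr : 0 < r) (hn : 0 < n) (hY : Measurable Y) (b : ℝ) :
    ∃ z < b, putCont P Y K r n k z < K - exp z := by
  have hgap : 0 < K * (1 - exp (-(r / n))) :=
    mul_pos hK (sub_pos.2 (exp_neg_div_lt_one hr hn))
  obtain ⟨z, hz_exp, hzb⟩ :=
    ((tendsto_exp_atBot.eventually (gt_mem_nhds hgap)).and (eventually_lt_atBot b)).exists
  refine ⟨z, hzb, (putCont_le_mul hK.le hr.le hY).trans_lt ?_⟩
  linarith

theorem putCont_lt_of_forall_ne (hK : 0 < K) (hr : 0 < r) (hn : 0 < n) (hY : Measurable Y)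
    {b : ℝ} (hne : ∀ z < b, putCont P Y K r n k z ≠ K - exp z) (hz : z < b) :
    putCont P Y K r n k z < K - exp z := by
  obtain ⟨z₀, hz₀, hlt⟩ := exists_putCont_lt (P := P) (k := k) hK hr hn hY b
  exact isPreconnected_Iio.lt_of_lt_of_ne (continuous_putCont hK.le hr.le hY).continuousOn
    (continuous_const.sub continuous_exp).continuousOn hne hz₀ hlt hz

theorem lt_putCont_of_forall_ne (hK : 0 ≤ K) (hr : 0 ≤ r) (hY : Measurable Y) {a b : ℝ}
    (hne : ∀ z ∈ Ioo b a, putCont P Y K r n k z ≠ K - exp z)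
    (ha : K - exp a < putCont P Y K r n k a) (hz : z ∈ Ioc b a) :
    K - exp z < putCont P Y K r n k z := by
  refine isPreconnected_Ioc.lt_of_lt_of_ne (continuous_const.sub continuous_exp).continuousOn
    (continuous_putCont hK hr hY).continuousOn ?_ (right_mem_Ioc.2 (hz.1.trans_le hz.2)) ha hz
  intro y hy
  rcases hy.2.lt_or_eq with hya | rfl
  · exact (hne y ⟨hy.1, hya⟩).symm
  · exact ha.ne

theorem putCont_lt_putCont_succ_of_le (hK : 0 ≤ K) (hr : 0 ≤ r) (hY : Measurable Y)
    (hup : ∀ ⦃y y'⦄, y ≤ y' → putV P Y K r n k y < putV P Y K r n (k + 1) y →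
      putV P Y K r n k y' < putV P Y K r n (k + 1) y')
    (hzx : z ≤ x) (hz : putCont P Y K r n k z < putCont P Y K r n (k + 1) z) :
    putCont P Y K r n k x < putCont P Y K r n (k + 1) x :=
  mul_lt_mul_of_pos_left (integral_comp_add_lt_of_le (integrable_putV_comp_add hK hr hY)
    (integrable_putV_comp_add hK hr hY) (putV_le_putV_succ hK hr hY k) hup hzx
    (lt_of_mul_lt_mul_left hz (exp_pos _).le)) (exp_pos _)

end PutValue

structure IsPutBoundary {Ω : Type*} [MeasurableSpace Ω] (P : Measure Ω) (Y : Ω → ℝ) (K r : ℝ)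
    (n : ℕ) (xb : ℕ → ℝ) : Prop where
  strictAnti : StrictAnti xb
  zero : xb 0 = log K
  root : ∀ k, putCont P Y K r n k (xb (k + 1)) = K - exp (xb (k + 1))
  unique : ∀ k, ∀ z < xb k, putCont P Y K r n k z = K - exp z → z = xb (k + 1)

namespace IsPutBoundary

variable {Ω : Type*} [MeasurableSpace Ω] {P : Measure Ω} {Y : Ω → ℝ}
  {K r : ℝ} {n k : ℕ} {xb : ℕ → ℝ} {x z : ℝ}

theorem exp_lt (hb : IsPutBoundary P Y K r n xb) (hK : 0 < K) (hz : z ≤ xb (k + 1)) :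
    exp z < K :=
  (lt_log_iff_exp_lt hK).1 (hz.trans_lt (hb.zero ▸ hb.strictAnti k.succ_pos))

variable [IsProbabilityMeasure P]

theorem putCont_lt (hb : IsPutBoundary P Y K r n xb) (hK : 0 < K) (hr : 0 < r) (hn : 0 < n)
    (hY : Measurable Y) (hz : z < xb (k + 1)) : putCont P Y K r n k z < K - exp z :=
  putCont_lt_of_forall_ne hK hr hn hY
    (fun y hy h => hy.ne (hb.unique k y (hy.trans (hb.strictAnti k.lt_succ_self)) h)) hz

theorem putV_succ_eq_of_le (hb : IsPutBoundary P Y K r n xb) (hK : 0 < K) (hr : 0 < r)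
    (hn : 0 < n) (hY : Measurable Y) (hz : z ≤ xb (k + 1)) :
    putV P Y K r n (k + 1) z = K - exp z := by
  have hcont : putCont P Y K r n k z ≤ K - exp z := by
    rcases hz.lt_or_eq with hz | rfl
    · exact (hb.putCont_lt hK hr hn hY hz).le
    · exact (hb.root k).le
  rw [putV_succ_eq, max_eq_left (sub_nonneg.2 (hb.exp_lt hK hz).le), max_eq_left hcont]

theorem putV_eq_putV_succ_of_le (hb : IsPutBoundary P Y K r n xb) (hK : 0 < K) (hr : 0 < r)
    (hn : 0 < n) (hY : Measurable Y) (hz : z ≤ xb (k + 1)) :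
    putV P Y K r n k z = putV P Y K r n (k + 1) z :=
  (putV_le_putV_succ hK.le hr.le hY k z).antisymm <|
    (hb.putV_succ_eq_of_le hK hr hn hY hz).trans_le ((le_max_left _ _).trans max_sub_exp_le_putV)

theorem lt_putCont_zero (hb : IsPutBoundary P Y K r n xb) (hK : 0 < K) (hr : 0 ≤ r)
    (hY : Measurable Y) (hYneg : ∀ y : ℝ, 0 < P {ω | Y ω < y}) (hx : xb 1 < x) :
    K - exp x < putCont P Y K r n 0 x := by
  rcases le_or_gt x (xb 0) with hx0 | hx0
  · refine lt_putCont_of_forall_ne hK.le hr hY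
      (fun y hy h => hy.1.ne' (hb.unique 0 y hy.2 h)) ?_ ⟨hx, hx0⟩
    rw [hb.zero, exp_log hK, sub_self]
    exact putCont_pos hK hr hY hYneg
  · have hKx : K < exp x := (log_lt_iff_lt_exp hK).1 (hb.zero ▸ hx0)
    linarith [putCont_pos (P := P) (n := n) (k := 0) (x := x) hK hr hY hYneg]

theorem putCont_lt_putCont_succ (hb : IsPutBoundary P Y K r n xb) (hK : 0 < K) (hr : 0 < r)
    (hn : 0 < n) (hY : Measurable Y)
    (hV : ∀ y, xb (k + 1) < y → putV P Y K r n k y < putV P Y K r n (k + 1) y)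
    (hx : xb (k + 1) ≤ x) : putCont P Y K r n k x < putCont P Y K r n (k + 1) x := by
  have hxb : xb (k + 2) < xb (k + 1) := hb.strictAnti (k + 1).lt_succ_self
  refine putCont_lt_putCont_succ_of_le hK.le hr.le hY ?_ (hxb.le.trans hx) ?_
  · intro y y' hyy' hy
    exact hV y' (hyy'.trans_lt' (lt_of_not_ge fun hyb =>
      hy.ne (hb.putV_eq_putV_succ_of_le hK hr hn hY hyb)))
  · rw [hb.root (k + 1)]
    exact hb.putCont_lt hK hr hn hY hxb

theorem lt_putCont_succ (hb : IsPutBoundary P Y K r n xb) (hK : 0 < K) (hr : 0 < r)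
    (hn : 0 < n) (hY : Measurable Y)
    (hG : ∀ y, xb (k + 1) < y → K - exp y < putCont P Y K r n k y)
    (hV : ∀ y, xb (k + 1) < y → putV P Y K r n k y < putV P Y K r n (k + 1) y)
    (hx : xb (k + 2) < x) : K - exp x < putCont P Y K r n (k + 1) x := by
  rcases le_or_gt x (xb (k + 1)) with hxk | hxk
  · refine lt_putCont_of_forall_ne hK.le hr.le hY
      (fun y hy h => hy.1.ne' (hb.unique (k + 1) y hy.2 h)) ?_ ⟨hx, hxk⟩
    rw [← hb.root k]
    exact hb.putCont_lt_putCont_succ hK hr hn hY hV le_rfl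
  · exact (hG x hxk).trans_le (putCont_le_putCont_succ hK.le hr.le hY)

theorem lt_putCont_and_putV_lt_putV_succ (hb : IsPutBoundary P Y K r n xb) (hK : 0 < K)
    (hr : 0 < r) (hn : 0 < n) (hY : Measurable Y) (hYneg : ∀ y : ℝ, 0 < P {ω | Y ω < y})
    (k : ℕ) :
    (∀ x, xb (k + 1) < x → K - exp x < putCont P Y K r n k x) ∧
      ∀ x, xb (k + 1) < x → putV P Y K r n k x < putV P Y K r n (k + 1) x := by
  induction k with
  | zero =>
    have hG := fun x (hx : xb 1 < x) => hb.lt_putCont_zero hK hr.le hY hYneg hx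
    refine ⟨hG, fun x hx => ?_⟩
    exact (max_lt (hG x hx) (putCont_pos hK hr.le hY hYneg)).trans_le (le_max_right _ _)
  | succ k ih =>
    have hG := fun x (hx : xb (k + 2) < x) => hb.lt_putCont_succ hK hr hn hY ih.1 ih.2 hx
    refine ⟨hG, fun x hx => ?_⟩
    have hcont : putCont P Y K r n k x < putCont P Y K r n (k + 1) x := by
      rcases lt_or_ge x (xb (k + 1)) with hxk | hxk
      · exact (hb.putCont_lt hK hr hn hY hxk).trans (hG x hx)
      · exact hb.putCont_lt_putCont_succ hK hr hn hY ih.2 hxk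
    exact (max_lt (max_lt (hG x hx) (putCont_pos hK hr.le hY hYneg)) hcont).trans_le
      (le_max_right _ _)

end IsPutBoundary

/-- with `(x̄_k)` the strictly decreasing sequence with `x̄_0 = log K` whose
terms solve the boundary equations, for every `k ≥ 1` and every `x > x̄_k`,
`V_k(x) > V_{k−1}(x)`. -/
theorem statement16 {Ω : Type*} [MeasurableSpace Ω] (P : Measure Ω) [IsProbabilityMeasure P]
    (K r : ℝ) (hK : 0 < K) (hr : 0 < r) (n : ℕ) (hn : 1 ≤ n)
    (Y : Ω → ℝ) (hY : Measurable Y)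
    (hYneg : ∀ y : ℝ, 0 < P {ω | Y ω < y})
    (xb : ℕ → ℝ) (hanti : StrictAnti xb) (hxb0 : xb 0 = Real.log K)
    (hsol : ∀ k : ℕ,
      Real.exp (-(r / n)) * ∫ ω, putV P Y K r n k (xb (k + 1) + Y ω) ∂P
        = K - Real.exp (xb (k + 1)))
    (huniq : ∀ k : ℕ, ∀ z : ℝ, z < xb k →
      (Real.exp (-(r / n)) * ∫ ω, putV P Y K r n k (z + Y ω) ∂P = K - Real.exp z) →
      z = xb (k + 1)) :
    ∀ k : ℕ, ∀ x : ℝ, xb (k + 1) < x →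
      putV P Y K r n k x < putV P Y K r n (k + 1) x := fun k =>
  (IsPutBoundary.lt_putCont_and_putV_lt_putV_succ ⟨hanti, hxb0, hsol, huniq⟩ hK hr hn hY hYneg
    k).2
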